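/- Let Y₁,…,Y_k be i.i.d. Laplace random variables with scale b > 0, let q₁,…,q_k ∈ [0,1], and Y = Σᵢ qᵢYᵢ. If α > kb, then Pr[Y ≥ α] ≤ exp(-α/(6b)). -/

import Mathlib

open MeasureTheory Real BigOperators

/-- The Laplace distribution with scale `b`, given by the density
`(1/(2b)) * exp (-|x|/b)` with respect to Lebesgue measure. -/
noncomputable def laplaceMeasure (b : ℝ) : Measure ℝ :=
  volume.withDensity fun x => ENNReal.ofReal ((1 / (2 * b)) * Real.exp (-|x| / b))

/-!
Chernoff's bound at `t = 1/(2b)`. A Laplace variable of scale `b` has moment generating function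
`(1 - b²s²)⁻¹` for `|s| < 1/b`, so each `qᵢYᵢ` has `E[exp(tqᵢYᵢ)] = (1 - qᵢ²/4)⁻¹ ≤ 4/3 ≤ e^{1/3}`.
By independence `Pr[Y ≥ α] ≤ exp(-α/(2b) + k/3)`, and `k/3 < α/(3b)` when `α > kb`.
-/

open Set Finset ProbabilityTheory

noncomputable def laplacePDF (b x : ℝ) : ℝ := (1 / (2 * b)) * exp (-|x| / b)

section LaplaceMeasure

variable {b s : ℝ}

lemma laplaceMeasure_eq_withDensity (b : ℝ) :
    laplaceMeasure b = volume.withDensity fun x => ENNReal.ofReal (laplacePDF b x) := rfl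

lemma laplacePDF_nonneg (hb : 0 ≤ b) (x : ℝ) : 0 ≤ laplacePDF b x := by
  unfold laplacePDF; positivity

@[fun_prop]
lemma measurable_laplacePDF (b : ℝ) : Measurable (laplacePDF b) := by
  unfold laplacePDF; fun_prop

lemma integrable_laplaceMeasure_iff (hb : 0 ≤ b) {g : ℝ → ℝ} :
    Integrable g (laplaceMeasure b) ↔ Integrable fun x => laplacePDF b x * g x := by
  rw [laplaceMeasure_eq_withDensity, integrable_withDensity_iff (by fun_prop)
    (.of_forall fun _ => ENNReal.ofReal_lt_top)]
  simp only [ENNReal.toReal_ofReal (laplacePDF_nonneg hb _), mul_comm]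

lemma integral_laplaceMeasure (hb : 0 ≤ b) (g : ℝ → ℝ) :
    ∫ x, g x ∂laplaceMeasure b = ∫ x, laplacePDF b x * g x := by
  rw [laplaceMeasure_eq_withDensity, integral_withDensity_eq_integral_toReal_smul (by fun_prop)
    (.of_forall fun _ => ENNReal.ofReal_lt_top)]
  simp only [ENNReal.toReal_ofReal (laplacePDF_nonneg hb _), smul_eq_mul]

lemma laplacePDF_mul_exp_of_nonpos {x : ℝ} (hx : x ≤ 0) :
    laplacePDF b x * exp (s * x) = (2 * b)⁻¹ * exp ((s + b⁻¹) * x) := by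
  rw [laplacePDF, abs_of_nonpos hx, mul_assoc, ← exp_add]
  ring_nf

lemma laplacePDF_mul_exp_of_pos {x : ℝ} (hx : 0 < x) :
    laplacePDF b x * exp (s * x) = (2 * b)⁻¹ * exp ((s - b⁻¹) * x) := by
  rw [laplacePDF, abs_of_pos hx, mul_assoc, ← exp_add]
  ring_nf

lemma integrableOn_Iic_laplacePDF_mul_exp (hs : -b⁻¹ < s) :
    IntegrableOn (fun x => laplacePDF b x * exp (s * x)) (Iic 0) :=
  IntegrableOn.congr_fun ((integrableOn_exp_mul_Iic (by linarith) 0).const_mul _)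
    (fun _ hx => (laplacePDF_mul_exp_of_nonpos hx).symm) measurableSet_Iic

lemma integrableOn_Ioi_laplacePDF_mul_exp (hs : s < b⁻¹) :
    IntegrableOn (fun x => laplacePDF b x * exp (s * x)) (Ioi 0) :=
  IntegrableOn.congr_fun ((integrableOn_exp_mul_Ioi (by linarith) 0).const_mul _)
    (fun _ hx => (laplacePDF_mul_exp_of_pos hx).symm) measurableSet_Ioi

lemma integral_Iic_laplacePDF_mul_exp (hb : 0 < b) (hs : -b⁻¹ < s) :
    ∫ x in Iic 0, laplacePDF b x * exp (s * x) = (2 * (1 + b * s))⁻¹ := by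
  have hpos : 0 < s + b⁻¹ := by linarith
  rw [setIntegral_congr_fun measurableSet_Iic fun _ hx => laplacePDF_mul_exp_of_nonpos hx,
    integral_const_mul, integral_exp_mul_Iic hpos, mul_zero, exp_zero]
  field_simp
  ring

lemma integral_Ioi_laplacePDF_mul_exp (hb : 0 < b) (hs : s < b⁻¹) :
    ∫ x in Ioi 0, laplacePDF b x * exp (s * x) = (2 * (1 - b * s))⁻¹ := by
  have hneg : s - b⁻¹ < 0 := by linarith
  rw [setIntegral_congr_fun measurableSet_Ioi fun _ hx => laplacePDF_mul_exp_of_pos hx,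
    integral_const_mul, integral_exp_mul_Ioi hneg, mul_zero, exp_zero, neg_div, ← div_neg,
    neg_sub]
  field_simp

theorem integrable_exp_mul_laplaceMeasure (hb : 0 < b) (hs : |s| < b⁻¹) :
    Integrable (fun x => exp (s * x)) (laplaceMeasure b) := by
  obtain ⟨hs₁, hs₂⟩ := abs_lt.mp hs
  rw [integrable_laplaceMeasure_iff hb.le, ← integrableOn_univ, ← Iic_union_Ioi (a := 0)]
  exact (integrableOn_Iic_laplacePDF_mul_exp hs₁).union (integrableOn_Ioi_laplacePDF_mul_exp hs₂)

theorem mgf_id_laplaceMeasure (hb : 0 < b) (hs : |s| < b⁻¹) :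
    mgf id (laplaceMeasure b) s = (1 - (b * s) ^ 2)⁻¹ := by
  obtain ⟨hs₁, hs₂⟩ := abs_lt.mp hs
  have h₁ : 0 < 1 + b * s := by nlinarith [mul_inv_cancel₀ hb.ne']
  have h₂ : 0 < 1 - b * s := by nlinarith [mul_inv_cancel₀ hb.ne']
  simp only [mgf, id]
  rw [integral_laplaceMeasure hb.le, ← intervalIntegral.integral_Iic_add_Ioi
    (integrableOn_Iic_laplacePDF_mul_exp hs₁) (integrableOn_Ioi_laplacePDF_mul_exp hs₂),
    integral_Iic_laplacePDF_mul_exp hb hs₁, integral_Ioi_laplacePDF_mul_exp hb hs₂,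
    show 1 - (b * s) ^ 2 = (1 + b * s) * (1 - b * s) by ring]
  field_simp
  ring

end LaplaceMeasure

lemma inv_one_sub_sq_le_exp_third {x : ℝ} (hx : |x| ≤ 1 / 2) : (1 - x ^ 2)⁻¹ ≤ exp (1 / 3) := by
  have hx2 : x ^ 2 ≤ 1 / 4 := by nlinarith [sq_abs x, abs_nonneg x]
  calc (1 - x ^ 2)⁻¹ ≤ 1 / 3 + 1 := by rw [inv_le_comm₀ (by linarith) (by norm_num)]; linarith
    _ ≤ exp (1 / 3) := add_one_le_exp _

lemma abs_mul_inv_two_mul_lt_inv {b c : ℝ} (hb : 0 < b) (hc : c ∈ Icc (0 : ℝ) 1) :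
    |c * (2 * b)⁻¹| < b⁻¹ := by
  rw [abs_of_nonneg (by have := hc.1; positivity)]
  calc c * (2 * b)⁻¹ ≤ 1 * (2 * b)⁻¹ := by gcongr; exact hc.2
    _ < b⁻¹ := by rw [one_mul]; gcongr; linarith

section LaplaceVariable

variable {Ω : Type*} {mΩ : MeasurableSpace Ω} {μ : Measure Ω} {Y : Ω → ℝ} {b s : ℝ}

theorem mgf_of_map_eq_laplaceMeasure (hY : AEMeasurable Y μ) (hlaw : μ.map Y = laplaceMeasure b)
    (hb : 0 < b) (hs : |s| < b⁻¹) : mgf Y μ s = (1 - (b * s) ^ 2)⁻¹ := by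
  rw [← mgf_id_map hY, hlaw, mgf_id_laplaceMeasure hb hs]

theorem integrable_exp_mul_of_map_eq_laplaceMeasure (hY : AEMeasurable Y μ)
    (hlaw : μ.map Y = laplaceMeasure b) (hb : 0 < b) (hs : |s| < b⁻¹) :
    Integrable (fun ω => exp (s * Y ω)) μ := by
  have h := integrable_exp_mul_laplaceMeasure hb hs
  rw [← hlaw, integrable_map_measure (by fun_prop) hY] at h
  exact h

theorem mgf_const_mul_of_map_eq_laplaceMeasure_le (hY : AEMeasurable Y μ)
    (hlaw : μ.map Y = laplaceMeasure b) (hb : 0 < b) {c : ℝ} (hc : c ∈ Icc (0 : ℝ) 1) :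
    mgf (fun ω => c * Y ω) μ (2 * b)⁻¹ ≤ exp (1 / 3) := by
  rw [mgf_const_mul, mgf_of_map_eq_laplaceMeasure hY hlaw hb (abs_mul_inv_two_mul_lt_inv hb hc)]
  apply inv_one_sub_sq_le_exp_third
  rw [show b * (c * (2 * b)⁻¹) = c / 2 by field_simp, abs_of_nonneg (by linarith [hc.1])]
  linarith [hc.2]

end LaplaceVariable

theorem measureReal_sum_ge_le_of_iIndepFun_of_mgf_le {ι Ω : Type*} {mΩ : MeasurableSpace Ω}
    {μ : Measure Ω} {X : ι → Ω → ℝ} (hindep : iIndepFun X μ) (hmeas : ∀ i, Measurable (X i))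
    {s : Finset ι} {t c : ℝ} (ht : 0 ≤ t)
    (hint : ∀ i ∈ s, Integrable (fun ω => exp (t * X i ω)) μ)
    (hmgf : ∀ i ∈ s, mgf (X i) μ t ≤ exp c) (ε : ℝ) :
    μ.real {ω | ε ≤ ∑ i ∈ s, X i ω} ≤ exp (-t * ε + #s * c) := by
  have := hindep.isProbabilityMeasure
  have hsum : (fun ω => ∑ i ∈ s, X i ω) = ∑ i ∈ s, X i := by ext; simp [Finset.sum_apply]
  calc μ.real {ω | ε ≤ ∑ i ∈ s, X i ω}
      ≤ exp (-t * ε) * mgf (∑ i ∈ s, X i) μ t := by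
        simpa only [← hsum] using
          measure_ge_le_exp_mul_mgf ε ht (hindep.integrable_exp_mul_sum hmeas hint)
    _ = exp (-t * ε) * ∏ i ∈ s, mgf (X i) μ t := by rw [hindep.mgf_sum hmeas]
    _ ≤ exp (-t * ε) * ∏ _i ∈ s, exp c := by
        gcongr with i hi
        · exact fun _ _ => mgf_nonneg
        · exact hmgf i hi
    _ = exp (-t * ε + #s * c) := by rw [prod_const, ← exp_nat_mul, ← exp_add]

theorem laplace_weighted_sum_tail_large_general
    {Ω : Type*} [MeasureSpace Ω]
    (k : ℕ) (b : ℝ) (hb : 0 < b)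
    (Y : Fin k → Ω → ℝ) (hmeas : ∀ i, Measurable (Y i))
    (hlaw : ∀ i, Measure.map (Y i) (volume : Measure Ω) = laplaceMeasure b)
    (hindep : ProbabilityTheory.iIndepFun Y (volume : Measure Ω))
    (q : Fin k → ℝ) (hq : ∀ i, q i ∈ Set.Icc (0 : ℝ) 1)
    (α : ℝ) (hα : k * b < α) :
    ((volume : Measure Ω) {ω | α ≤ ∑ i, q i * Y i ω}).toReal ≤
      Real.exp (-α / (6 * b)) := by
  calc _ ≤ exp (-(2 * b)⁻¹ * α + #(univ : Finset (Fin k)) * (1 / 3)) :=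
        measureReal_sum_ge_le_of_iIndepFun_of_mgf_le
          (hindep.comp (fun i x => q i * x) fun i => measurable_const_mul (q i))
          (fun i => (hmeas i).const_mul (q i)) (by positivity)
          (fun i _ => by
            convert integrable_exp_mul_of_map_eq_laplaceMeasure (hmeas i).aemeasurable (hlaw i) hb
              (abs_mul_inv_two_mul_lt_inv hb (hq i)) using 3 with ω
            simp only [Function.comp_apply]
            ring)
          (fun i _ => mgf_const_mul_of_map_eq_laplaceMeasure_le (hmeas i).aemeasurable (hlaw i) hb
            (hq i)) α
    _ ≤ exp (-α / (6 * b)) := by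
        rw [exp_le_exp, card_univ, Fintype.card_fin]
        have : -α / (6 * b) - (-(2 * b)⁻¹ * α + k * (1 / 3)) = (α - k * b) / (3 * b) := by
          field_simp; ring
        linarith [div_pos (sub_pos.mpr hα) (by positivity : (0 : ℝ) < 3 * b)]

/-- Tail bound for weighted sums of i.i.d. Laplace random variables,
large-deviation regime: if `α > k b` then
`Pr[∑ qᵢ Yᵢ ≥ α] ≤ exp (-α / (6 b))`. -/
theorem laplace_weighted_sum_tail_large
    {Ω : Type*} [MeasureSpace Ω] [IsProbabilityMeasure (volume : Measure Ω)]
    (k : ℕ) (hk : 0 < k) (b : ℝ) (hb : 0 < b)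
    (Y : Fin k → Ω → ℝ) (hmeas : ∀ i, Measurable (Y i))
    (hlaw : ∀ i, Measure.map (Y i) (volume : Measure Ω) = laplaceMeasure b)
    (hindep : ProbabilityTheory.iIndepFun Y (volume : Measure Ω))
    (q : Fin k → ℝ) (hq : ∀ i, q i ∈ Set.Icc (0 : ℝ) 1)
    (α : ℝ) (hα : k * b < α) :
    ((volume : Measure Ω) {ω | α ≤ ∑ i, q i * Y i ω}).toReal ≤
      Real.exp (-α / (6 * b)) :=
  laplace_weighted_sum_tail_large_general k b hb Y hmeas hlaw hindep q hq α hα
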